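/- arXiv:1208.4587 — 4 statements merged into one kernel-verified Lean document; each statement's English description precedes it below -/
import Mathlib

section
/- Let RF(n-1) be the reduced free group on generators τ₁,…,τ_{n-1}, i.e. the quotient of the free group F(n-1) by the normal closure of all elements [τ_i, g τ_i g⁻¹] for all i and all g ∈ F(n-1). Then the n-th term of the lower central series of RF(n-1) is trivial: RF(n-1)_n = {1}. -/
/-!
If a subgroup `S` is generated by normal abelian subgroups `N₁, …, N_m`, then the `k`-th term of
the lower central series of `S` lies in the subgroup generated by all intersections of `k + 1`
distinct `Nᵢ`: commuting `⋂_{i ∈ s} Nᵢ` with `N_j` lands in `⋂_{i ∈ s ∪ {j}} Nᵢ` when `j ∉ s`,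
and in `⁅N_j, N_j⁆ = 1` when `j ∈ s`. With only `m` indices there are no intersections of
`m + 1` distinct `Nᵢ`, so the `m`-th term vanishes.

The reduced free group `RF(m)` is generated by the normal closures of its generators `τᵢ`, and
each of these is abelian because the defining relations make `τᵢ` commute with all its conjugates.
-/

open scoped commutatorElement

/-- Relations of the reduced free group: `[τ_i, g τ_i g⁻¹]` for all generators `i`
and all elements `g` of the free group. -/
def reducedFreeRels (m : ℕ) : Set (FreeGroup (Fin m)) :=
  {r | ∃ (i : Fin m) (g : FreeGroup (Fin m)),
    r = ⁅FreeGroup.of i, g * FreeGroup.of i * g⁻¹⁆}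

/-- The reduced free group `RF(m)` on `m` generators. -/
def ReducedFreeGroup (m : ℕ) := PresentedGroup (reducedFreeRels m)

instance (m : ℕ) : Group (ReducedFreeGroup m) := by
  unfold ReducedFreeGroup; infer_instance

namespace Subgroup

variable {G : Type*} [Group G]

instance iInf_normal {ι : Sort*} (H : ι → Subgroup G) [∀ i, (H i).Normal] :
    (⨅ i, H i).Normal :=
  ⟨fun n hn g => mem_iInf.2 fun i => Normal.conj_mem inferInstance n (mem_iInf.1 hn i) g⟩

theorem commutator_le_iff_le_comap_centralizer (H K L : Subgroup G) [L.Normal] :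
    ⁅H, K⁆ ≤ L ↔
      K ≤ (centralizer (H.map (QuotientGroup.mk' L))).comap (QuotientGroup.mk' L) := by
  rw [← map_le_iff_le_comap, ← commutator_eq_bot_iff_le_centralizer, commutator_comm,
    ← map_commutator, map_eq_bot_iff, QuotientGroup.ker_mk']

theorem iSup_commutator_iSup_le {α β : Sort*} (A : α → Subgroup G) (B : β → Subgroup G)
    {L : Subgroup G} [L.Normal] (h : ∀ a b, ⁅A a, B b⁆ ≤ L) : ⁅⨆ a, A a, ⨆ b, B b⁆ ≤ L := by
  rw [commutator_comm, commutator_le_iff_le_comap_centralizer]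
  refine iSup_le fun a => ?_
  rw [← commutator_le_iff_le_comap_centralizer, commutator_comm,
    commutator_le_iff_le_comap_centralizer]
  exact iSup_le fun b => (commutator_le_iff_le_comap_centralizer _ _ _).1 (h a b)

variable {ι : Type*} (N : ι → Subgroup G)

def iSupIntersections (k : ℕ) : Subgroup G :=
  ⨆ s : {s : Finset ι // s.card = k}, ⨅ i ∈ s.1, N i

variable [∀ i, (N i).Normal]

instance (k : ℕ) : (iSupIntersections N k).Normal := by
  unfold iSupIntersections; infer_instance

theorem commutator_biInf_le_iSupIntersections [∀ i, IsMulCommutative (N i)] {k : ℕ}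
    (s : Finset ι) (hs : s.card = k) (j : ι) :
    ⁅⨅ i ∈ s, N i, N j⁆ ≤ iSupIntersections N (k + 1) := by
  classical
  by_cases hj : j ∈ s
  · calc ⁅⨅ i ∈ s, N i, N j⁆ ≤ ⁅N j, N j⁆ := commutator_mono (biInf_le _ hj) le_rfl
      _ = ⊥ := commutator_self_eq_bot_iff.2 inferInstance
      _ ≤ _ := bot_le
  · refine le_trans ?_ (le_iSup (fun s : {s : Finset ι // s.card = k + 1} => ⨅ i ∈ s.1, N i)
      ⟨insert j s, by rw [Finset.card_insert_of_notMem hj, hs]⟩)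
    refine le_iInf₂ fun i hi => ?_
    rcases Finset.mem_insert.1 hi with rfl | hi
    · exact commutator_le_right _ _
    · exact (commutator_mono (biInf_le _ hi) le_rfl).trans (commutator_le_left _ _)

theorem lowerCentralSeries_iSup_le_iSupIntersections [∀ i, IsMulCommutative (N i)] (k : ℕ) :
    (⨆ i, N i).lowerCentralSeries k ≤ iSupIntersections N (k + 1) := by
  induction k with
  | zero =>
    exact iSup_le fun i => le_iSup_of_le ⟨{i}, Finset.card_singleton i⟩ (by simp)
  | succ k ih =>
    calc (⨆ i, N i).lowerCentralSeries (k + 1) = ⁅(⨆ i, N i).lowerCentralSeries k, ⨆ j, N j⁆ :=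
          lowerCentralSeries_succ _ k
      _ ≤ ⁅iSupIntersections N (k + 1), ⨆ j, N j⁆ := commutator_mono ih le_rfl
      _ ≤ iSupIntersections N (k + 2) :=
          iSup_commutator_iSup_le _ _ fun s j => commutator_biInf_le_iSupIntersections N s.1 s.2 j

theorem lowerCentralSeries_iSup_card_eq_bot [Fintype ι] [∀ i, IsMulCommutative (N i)] :
    (⨆ i, N i).lowerCentralSeries (Fintype.card ι) = ⊥ := by
  refine eq_bot_iff.2 <| (lowerCentralSeries_iSup_le_iSupIntersections N _).trans <|
    iSup_le fun s => ?_
  have := s.1.card_le_univ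
  have := s.2
  omega

theorem isMulCommutative_normalClosure_singleton {x : G}
    (h : ∀ g : G, Commute x (g * x * g⁻¹)) : IsMulCommutative (normalClosure {x}) := by
  refine isMulCommutative_closure fun a ha b hb => ?_
  simp only [Group.mem_conjugatesOfSet_iff, Set.mem_singleton_iff, exists_eq_left,
    isConj_iff] at ha hb
  obtain ⟨u, rfl⟩ := ha
  obtain ⟨v, rfl⟩ := hb
  -- conjugating `x` and `(u⁻¹ v) x (u⁻¹ v)⁻¹` by `u`
  simpa [mul_assoc] using ((h (u⁻¹ * v)).map (MulAut.conj u)).eq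

end Subgroup

namespace ReducedFreeGroup

variable {m : ℕ}

def of (i : Fin m) : ReducedFreeGroup m := PresentedGroup.of i

theorem commute_of_conj (i : Fin m) (g : ReducedFreeGroup m) :
    Commute (of i) (g * of i * g⁻¹) := by
  obtain ⟨g, rfl⟩ := PresentedGroup.mk_surjective _ g
  rw [← commutatorElement_eq_one_iff_commute]
  exact (map_commutatorElement (PresentedGroup.mk _) _ _).symm.trans
    (PresentedGroup.one_of_mem ⟨i, g, rfl⟩)

theorem iSup_normalClosure_of_eq_top :
    ⨆ i : Fin m, Subgroup.normalClosure {of i} = ⊤ :=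
  eq_top_iff.2 fun x _ => PresentedGroup.generated_by _ (⨆ i, Subgroup.normalClosure {of i})
    (fun i => Subgroup.mem_iSup_of_mem i (Subgroup.subset_normalClosure rfl)) x

end ReducedFreeGroup

/-- Mathlib indexes the lower central series from `0`, so the paper's `n`-th term is
`lowerCentralSeries (n - 1)`. -/
theorem stmt0_general (n : ℕ) :
    (⊤ : Subgroup (ReducedFreeGroup (n - 1))).lowerCentralSeries (n - 1) = ⊥ := by
  have := fun i => Subgroup.isMulCommutative_normalClosure_singleton
    (ReducedFreeGroup.commute_of_conj (m := n - 1) i)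
  simpa [ReducedFreeGroup.iSup_normalClosure_of_eq_top] using
    Subgroup.lowerCentralSeries_iSup_card_eq_bot fun i : Fin (n - 1) =>
      Subgroup.normalClosure {ReducedFreeGroup.of i}

/-- The `n`-th term (in the paper's 1-based indexing, i.e. Mathlib's
`lowerCentralSeries _ (n-1)`) of the lower central series of `RF(n-1)` is trivial. -/
theorem stmt0 (n : ℕ) (hn : 1 ≤ n) :
    (⊤ : Subgroup (ReducedFreeGroup (n - 1))).lowerCentralSeries (n - 1) = ⊥ :=
  stmt0_general n
end

section
/- In the reduced free group RF(n-1) on generators τ₁,…,τ_{n-1}, every simple iterated commutator [τ_{i₁}, τ_{i₂}, …, τ_{i_k}] (meaning [⋯[[τ_{i₁},τ_{i₂}],τ_{i₃}],…,τ_{i_k}]) in which some generator appears twice (τ_{i_s} = τ_{i_r} for some s ≠ r with the repetition occurring after the first occurrence) is trivial. -/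
open scoped commutatorElement

/-- The generators `τ_i` of the reduced free group. -/
def ReducedFreeGroup.τ {m : ℕ} (i : Fin m) : ReducedFreeGroup m :=
  PresentedGroup.of i

/-- Left-normed simple commutator `[a₁,…,a_k] = [⋯[[a₁,a₂],a₃],…,a_k]`. -/
def simpleCommutator {G : Type*} [Group G] : List G → G
  | [] => 1
  | a :: t => t.foldl (fun x y => ⁅x, y⁆) a

/-!
Fix a generator `τ` occurring at positions `s < r`. In `RF(m)` the normal closure `N` of `τ` is
abelian: its generators are the conjugates of `τ`, and the defining relations say exactly that any
two of them commute. Since `N` is normal and contains the `s`-th entry, the partial commutator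
`[τ_{i₁}, …, τ_{i_{r-1}}]` lies in `N`; its commutator with `τ_{i_r} = τ ∈ N` is therefore trivial,
and all further commutators of `1` are trivial.
-/

namespace ReducedFreeGroup

variable {m : ℕ}

theorem commutatorElement_τ_conj_eq_one (i : Fin m) (g : ReducedFreeGroup m) :
    ⁅τ i, g * τ i * g⁻¹⁆ = 1 := by
  obtain ⟨g, rfl⟩ := PresentedGroup.mk_surjective (reducedFreeRels m) g
  have hrel := PresentedGroup.one_of_mem (rels := reducedFreeRels m) ⟨i, g, rfl⟩
  rw [map_commutatorElement, map_mul, map_mul, map_inv] at hrel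
  exact hrel

theorem commute_conj_τ (i : Fin m) (x y : ReducedFreeGroup m) :
    Commute (x * τ i * x⁻¹) (y * τ i * y⁻¹) := by
  rw [← commutatorElement_eq_one_iff_commute]
  calc ⁅x * τ i * x⁻¹, y * τ i * y⁻¹⁆
      = x * ⁅τ i, (x⁻¹ * y) * τ i * (x⁻¹ * y)⁻¹⁆ * x⁻¹ := by group
    _ = 1 := by rw [commutatorElement_τ_conj_eq_one, mul_one, mul_inv_cancel]

theorem isMulCommutative_normalClosure_τ (i : Fin m) :
    IsMulCommutative (Subgroup.normalClosure {τ i}) := by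
  refine Subgroup.isMulCommutative_closure fun a ha b hb => ?_
  obtain ⟨_, rfl, ha⟩ := Group.mem_conjugatesOfSet_iff.mp ha
  obtain ⟨_, rfl, hb⟩ := Group.mem_conjugatesOfSet_iff.mp hb
  obtain ⟨x, rfl⟩ := isConj_iff.mp ha
  obtain ⟨y, rfl⟩ := isConj_iff.mp hb
  exact commute_conj_τ i x y

end ReducedFreeGroup

section SimpleCommutator

variable {G : Type*} [Group G]

theorem List.foldl_commutatorElement_one (l : List G) : l.foldl (⁅·, ·⁆) 1 = 1 := by
  induction l with
  | nil => rfl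
  | cons b l ih => rw [List.foldl_cons, commutatorElement_one_left, ih]

theorem List.foldl_commutatorElement_mem {N : Subgroup G} [N.Normal] {l : List G} {a : G}
    (h : a ∈ N ∨ ∃ b ∈ l, b ∈ N) : l.foldl (⁅·, ·⁆) a ∈ N := by
  induction l generalizing a with
  | nil => simpa using h
  | cons c l ih =>
    refine ih ?_
    rcases h with ha | ⟨b, hb, hbN⟩
    · exact .inl (Subgroup.commutator_le_left N ⊤ (Subgroup.commutator_mem_commutator ha trivial))
    · rcases List.mem_cons.mp hb with rfl | hbl
      · exact .inl (Subgroup.commutator_le_right ⊤ N (Subgroup.commutator_mem_commutator trivial hbN))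
      · exact .inr ⟨b, hbl, hbN⟩

theorem simpleCommutator_mem_of_mem {N : Subgroup G} [N.Normal] {l : List G}
    (h : ∃ b ∈ l, b ∈ N) : simpleCommutator l ∈ N := by
  obtain ⟨b, hb, hbN⟩ := h
  cases l with
  | nil => simp at hb
  | cons a l =>
    refine List.foldl_commutatorElement_mem ?_
    rcases List.mem_cons.mp hb with rfl | hbl
    exacts [.inl hbN, .inr ⟨b, hbl, hbN⟩]

theorem simpleCommutator_append_cons {u : List G} (hu : u ≠ []) (b : G) (v : List G) :
    simpleCommutator (u ++ b :: v) = v.foldl (⁅·, ·⁆) ⁅simpleCommutator u, b⁆ := by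
  obtain ⟨a, u, rfl⟩ := List.exists_cons_of_ne_nil hu
  simp only [simpleCommutator, List.cons_append, List.foldl_append, List.foldl_cons]

theorem simpleCommutator_eq_one_of_getElem_mem {N : Subgroup G} [N.Normal] [IsMulCommutative N]
    {l : List G} {s r : ℕ} (hsr : s < r) (hr : r < l.length)
    (hs : l[s] ∈ N) (hr' : l[r] ∈ N) : simpleCommutator l = 1 := by
  have hs_mem : l[s] ∈ l.take r := List.mem_take_iff_getElem.mpr ⟨s, by omega, rfl⟩
  have hprefix : simpleCommutator (l.take r) ∈ N := simpleCommutator_mem_of_mem ⟨l[s], hs_mem, hs⟩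
  have hsplit : l = l.take r ++ l[r] :: l.drop (r + 1) := by
    rw [← List.drop_eq_getElem_cons hr, List.take_append_drop]
  rw [hsplit, simpleCommutator_append_cons (List.ne_nil_of_mem hs_mem),
    commutatorElement_eq_one_iff_commute.mpr (setLike_mul_comm hprefix hr'),
    List.foldl_commutatorElement_one]

end SimpleCommutator

/-- Any simple iterated commutator of generators of the reduced free group
in which some generator repeats (the repetition occurring after the first
occurrence) is trivial. -/
theorem stmt1 (m k : ℕ) (i : Fin k → Fin m) (s r : Fin k)
    (hsr : s < r) (hrep : i s = i r) :
    simpleCommutator (List.ofFn fun j => ReducedFreeGroup.τ (i j)) = 1 := by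
  have := ReducedFreeGroup.isMulCommutative_normalClosure_τ (i s)
  have hτ : ReducedFreeGroup.τ (i s) ∈ Subgroup.normalClosure {ReducedFreeGroup.τ (i s)} :=
    Subgroup.subset_normalClosure rfl
  exact simpleCommutator_eq_one_of_getElem_mem hsr (by simp) (by simpa using hτ)
    (by simpa [← hrep] using hτ)
end

section
/- Let F be the free group on generators t₁,…,t_m, and let G be a quotient of F in which every left-normed commutator [t_{i₁},…,t_{i_k}] with a repeated index (i_s = i_r for some s < r) is trivial, and moreover all commutators of length n are trivial. Then G is nilpotent of class at most n−1. -/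
/-!
The `k`-th term of the lower central series of a group generated by `t₁, …, t_m` lies in the
normal closure of the left-normed commutators of length `k + 1` in the generators. For `k = 0` this
is generation. For the inductive step, work modulo the normal closure `M` of the commutators of
length `k + 2`: each commutator of length `k + 1` commutes with every generator there, hence is
central, so its normal closure commutes with all of `G` modulo `M`. When all commutators of
length `n` vanish, the `(n - 1)`-th term is therefore trivial.
-/

open scoped commutatorElement

section

variable {G H : Type*} [Group G] [Group H]

lemma map_simpleCommutator (f : G →* H) :
    ∀ l : List G, f (simpleCommutator l) = simpleCommutator (l.map f)
  | [] => map_one f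
  | a :: t => by
    simp only [simpleCommutator, List.map_cons, List.foldl_map]
    induction t generalizing a with
    | nil => rfl
    | cons b t ih => simpa only [List.foldl_cons, map_commutatorElement] using ih ⁅a, b⁆

lemma simpleCommutator_append_singleton {l : List G} (hl : l ≠ []) (x : G) :
    simpleCommutator (l ++ [x]) = ⁅simpleCommutator l, x⁆ := by
  cases l with
  | nil => exact absurd rfl hl
  | cons a t => simp [simpleCommutator, List.foldl_append]

def leftNormedCommutators {ι : Type*} (t : ι → G) (k : ℕ) : Set G :=
  Set.range fun i : Fin k → ι => simpleCommutator (List.ofFn fun j => t (i j))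

lemma commutator_mem_leftNormedCommutators_succ {ι : Type*} {t : ι → G} {k : ℕ} {x : G}
    (hx : x ∈ leftNormedCommutators t (k + 1)) (a : ι) :
    ⁅x, t a⁆ ∈ leftNormedCommutators t (k + 2) := by
  obtain ⟨i, rfl⟩ := hx
  refine ⟨Fin.snoc i a, ?_⟩
  simp only [List.ofFn_succ' (n := k + 1), Fin.snoc_castSucc, Fin.snoc_last, List.concat_eq_append]
  exact simpleCommutator_append_singleton (by simp) _

lemma Subgroup.normalClosure_le_upperCentralSeriesStep {S T : Set G} (hT : closure T = ⊤)
    (M : Subgroup G) [M.Normal] (hST : ∀ s ∈ S, ∀ t ∈ T, ⁅s, t⁆ ∈ M) :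
    normalClosure S ≤ M.upperCentralSeriesStep := by
  have : M.upperCentralSeriesStep.Normal :=
    upperCentralSeriesStep_eq_comap_center M ▸ Normal.comap inferInstance _
  refine normalClosure_le_normal fun s hs y => ?_
  have hcomm_iff : ∀ z, ⁅s, z⁆ ∈ M ↔ z ∈ (centralizer {(s : G ⧸ M)}).comap (QuotientGroup.mk' M) := by
    intro z
    rw [mem_comap, mem_centralizer_singleton_iff, eq_comm, ← commutatorElement_eq_one_iff_mul_comm,
      ← QuotientGroup.eq_one_iff, ← QuotientGroup.mk'_apply, map_commutatorElement]
    rfl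
  have hclosure : closure T ≤ (centralizer {(s : G ⧸ M)}).comap (QuotientGroup.mk' M) :=
    closure_le _ |>.2 fun t ht => (hcomm_iff t).1 (hST s hs t ht)
  exact (hcomm_iff y).2 (hclosure (hT ▸ mem_top y))

theorem Subgroup.lowerCentralSeries_le_normalClosure_leftNormedCommutators {ι : Type*}
    {t : ι → G} (ht : closure (Set.range t) = ⊤) (k : ℕ) :
    (⊤ : Subgroup G).lowerCentralSeries k ≤ normalClosure (leftNormedCommutators t (k + 1)) := by
  induction k with
  | zero =>
    rw [lowerCentralSeries_zero, ← ht]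
    refine (closure_mono ?_).trans closure_le_normalClosure
    rintro _ ⟨a, rfl⟩
    exact ⟨fun _ => a, rfl⟩
  | succ k ih =>
    have hstep : ∀ x ∈ leftNormedCommutators t (k + 1), ∀ y ∈ Set.range t,
        ⁅x, y⁆ ∈ normalClosure (leftNormedCommutators t (k + 2)) := by
      rintro x hx _ ⟨a, rfl⟩
      exact subset_normalClosure (commutator_mem_leftNormedCommutators_succ hx a)
    rw [lowerCentralSeries_succ, commutator_le]
    exact fun x hx y _ => normalClosure_le_upperCentralSeriesStep ht _ hstep (ih hx) y

end

/-- Mathlib indexes the lower central series from `0`, so the paper's `G_n` is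
`lowerCentralSeries (n - 1)`. -/
theorem stmt11_general (m n : ℕ) (hn : 1 ≤ n) (G : Type*) [Group G]
    (φ : FreeGroup (Fin m) →* G) (hsurj : Function.Surjective φ)
    (hlen : ∀ i : Fin n → Fin m,
      φ (simpleCommutator (List.ofFn fun j => FreeGroup.of (i j))) = 1) :
    (⊤ : Subgroup G).lowerCentralSeries (n - 1) = ⊥ := by
  have hgen : Subgroup.closure (Set.range (φ ∘ FreeGroup.of)) = ⊤ := by
    rw [Set.range_comp, ← MonoidHom.map_closure, FreeGroup.closure_range_of,
      ← MonoidHom.range_eq_map, MonoidHom.range_eq_top.2 hsurj]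
  have hγ := Subgroup.lowerCentralSeries_le_normalClosure_leftNormedCommutators hgen (n - 1)
  rw [Nat.sub_add_cancel hn] at hγ
  refine eq_bot_iff.2 (hγ.trans (Subgroup.normalClosure_eq_bot_iff.2 ?_).le)
  rintro _ ⟨i, rfl⟩
  simpa [map_simpleCommutator, List.map_ofFn, Function.comp_def] using hlen i

/-- Let `G` be a quotient of the free group on `t₁,…,t_m` in which every
left-normed commutator of generators with a repeated index is trivial, and all
commutators of generators of length `n` are trivial.  Then `G` is nilpotent of
class at most `n-1`, i.e. the paper's `G_n` (Mathlib's
`lowerCentralSeries G (n-1)`) is trivial. -/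
theorem stmt11 (m n : ℕ) (hn : 1 ≤ n) (G : Type*) [Group G]
    (φ : FreeGroup (Fin m) →* G) (hsurj : Function.Surjective φ)
    (hrep : ∀ (k : ℕ) (i : Fin k → Fin m) (s r : Fin k), s < r → i s = i r →
      φ (simpleCommutator (List.ofFn fun j => FreeGroup.of (i j))) = 1)
    (hlen : ∀ i : Fin n → Fin m,
      φ (simpleCommutator (List.ofFn fun j => FreeGroup.of (i j))) = 1) :
    (⊤ : Subgroup G).lowerCentralSeries (n - 1) = ⊥ :=
  stmt11_general m n hn G φ hsurj hlen
end

section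
/- Let μ be functions on a monoid M indexed by subsequences, satisfying the product formula μ(j₁,…,j_p)(z₁z₂) = μ(j₁,…,j_p)(z₁) + μ(j₁,…,j_p)(z₂) + Σ_{k=1}^{p-1} μ(j₁,…,j_k)(z₁)μ(j_{k+1},…,j_p)(z₂). Suppose elements g_σ (σ ∈ Σ, a finite index set) satisfy μ(I)(g_σ) = 0 for all proper (shorter) index sequences I, and μ(I_ξ)(g_σ) = δ_{ξσ} (Kronecker delta) for designated top-length sequences I_ξ, ξ ∈ Σ. Then for z = Π_σ g_σ^{e_σ} (any order, any integer exponents e_σ, assuming the g_σ and their inverses also have vanishing lower invariants), one has μ(I_ξ)(z) = e_ξ for every ξ. -/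
/-!
Once the factors of a product have vanishing invariants in all lengths `< p`, every correction
term `μ(I.take k)(z₁) μ(I.drop k)(z₂)` of the product formula with `|I| ≤ p` has a vanishing first
factor. Hence such elements form a submonoid on which each `μ(I)` with `|I| ≤ p` is additive, and
`μ(I_ξ)(Π_σ g_σ^{e_σ}) = Σ_σ e_σ δ_{ξσ} = e_ξ`.
-/

def MilnorProductFormula {ι M : Type*} [Mul M] (μ : List ι → M → ℤ) : Prop :=
  ∀ (I : List ι) (z₁ z₂ : M), μ I (z₁ * z₂) =
    μ I z₁ + μ I z₂ + ∑ k ∈ Finset.Ico 1 I.length, μ (I.take k) z₁ * μ (I.drop k) z₂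

def VanishesBelow {ι M : Type*} (μ : List ι → M → ℤ) (n : ℕ) (z : M) : Prop :=
  ∀ I : List ι, I.length < n → μ I z = 0

namespace MilnorProductFormula

variable {ι M : Type*} {μ : List ι → M → ℤ} {n : ℕ} {I : List ι}

theorem apply_mul_of_vanishesBelow [Mul M] (hμ : MilnorProductFormula μ) {z₁ : M}
    (h₁ : VanishesBelow μ n z₁) (z₂ : M) (hI : I.length ≤ n) :
    μ I (z₁ * z₂) = μ I z₁ + μ I z₂ := by
  rw [hμ, Finset.sum_eq_zero, add_zero]
  intro k hk
  rw [Finset.mem_Ico] at hk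
  rw [h₁ _ (by rw [List.length_take]; omega), zero_mul]

theorem apply_one [MulOneClass M] (hμ : MilnorProductFormula μ) (I : List ι) : μ I 1 = 0 := by
  induction hI : I.length using Nat.strong_induction_on generalizing I with
  | _ m ih =>
    have h1 : VanishesBelow μ I.length (1 : M) := fun J hJ => ih _ (hI ▸ hJ) J rfl
    have := hμ.apply_mul_of_vanishesBelow h1 1 le_rfl
    rw [mul_one] at this
    omega

theorem vanishesBelow_one [MulOneClass M] (hμ : MilnorProductFormula μ) :
    VanishesBelow μ n (1 : M) :=
  fun I _ => hμ.apply_one I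

theorem vanishesBelow_mul [Mul M] (hμ : MilnorProductFormula μ) {z₁ z₂ : M}
    (h₁ : VanishesBelow μ n z₁) (h₂ : VanishesBelow μ n z₂) : VanishesBelow μ n (z₁ * z₂) :=
  fun I hI => by rw [hμ.apply_mul_of_vanishesBelow h₁ z₂ hI.le, h₁ I hI, h₂ I hI, add_zero]

theorem vanishesBelow_zpow {G : Type*} [Group G] {μ : List ι → G → ℤ}
    (hμ : MilnorProductFormula μ) {g : G} (h : VanishesBelow μ n g) (h' : VanishesBelow μ n g⁻¹)
    (k : ℤ) : VanishesBelow μ n (g ^ k) := by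
  induction k using Int.induction_on with
  | zero => simpa using hμ.vanishesBelow_one
  | succ k ih => simpa [zpow_add_one] using hμ.vanishesBelow_mul ih h
  | pred k ih => simpa [zpow_sub_one] using hμ.vanishesBelow_mul ih h'

theorem apply_zpow {G : Type*} [Group G] {μ : List ι → G → ℤ}
    (hμ : MilnorProductFormula μ) {g : G} (h : VanishesBelow μ n g) (h' : VanishesBelow μ n g⁻¹)
    (hI : I.length ≤ n) (k : ℤ) : μ I (g ^ k) = k * μ I g := by
  have hinv : μ I g⁻¹ = -μ I g := by
    have := hμ.apply_mul_of_vanishesBelow h g⁻¹ hI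
    rw [mul_inv_cancel, hμ.apply_one] at this
    omega
  induction k using Int.induction_on with
  | zero => simpa using hμ.apply_one I
  | succ k ih =>
    rw [zpow_add_one, hμ.apply_mul_of_vanishesBelow (hμ.vanishesBelow_zpow h h' k) g hI, ih]
    ring
  | pred k ih =>
    rw [zpow_sub_one, hμ.apply_mul_of_vanishesBelow (hμ.vanishesBelow_zpow h h' _) g⁻¹ hI, ih,
      hinv]
    ring

theorem apply_list_prod [Monoid M] (hμ : MilnorProductFormula μ) {l : List M}
    (hl : ∀ z ∈ l, VanishesBelow μ n z) (hI : I.length ≤ n) : μ I l.prod = (l.map (μ I)).sum := by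
  induction l with
  | nil => exact hμ.apply_one I
  | cons z l ih =>
    rw [List.forall_mem_cons] at hl
    rw [List.prod_cons, hμ.apply_mul_of_vanishesBelow hl.1 _ hI, ih hl.2, List.map_cons,
      List.sum_cons]

end MilnorProductFormula

theorem stmt14_general (ι S G : Type*) [Group G] [DecidableEq S]
    (μ : List ι → G → ℤ)
    (hprod : ∀ (I : List ι) (z₁ z₂ : G), μ I (z₁ * z₂) =
      μ I z₁ + μ I z₂ + ∑ k ∈ Finset.Ico 1 I.length, μ (I.take k) z₁ * μ (I.drop k) z₂)
    (p : ℕ) (topSeq : S → List ι)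
    (hlen : ∀ ξ, (topSeq ξ).length = p)
    (g : S → G) (e : S → ℤ)
    (hlow : ∀ (σ : S) (I : List ι), I.length < p → μ I (g σ) = 0 ∧ μ I (g σ)⁻¹ = 0)
    (htop : ∀ ξ σ : S, μ (topSeq ξ) (g σ) = if ξ = σ then 1 else 0)
    (l : List S) (hnd : l.Nodup) (hall : ∀ σ : S, σ ∈ l) :
    ∀ ξ : S, μ (topSeq ξ) ((l.map fun σ => g σ ^ e σ).prod) = e ξ := by
  intro ξ
  have hμ : MilnorProductFormula μ := hprod
  have hg (σ : S) : VanishesBelow μ p (g σ) := fun I hI => (hlow σ I hI).1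
  have hg' (σ : S) : VanishesBelow μ p (g σ)⁻¹ := fun I hI => (hlow σ I hI).2
  have hfactors : ∀ z ∈ l.map fun σ => g σ ^ e σ, VanishesBelow μ p z := by
    simpa using fun σ _ => hμ.vanishesBelow_zpow (hg σ) (hg' σ) (e σ)
  rw [hμ.apply_list_prod hfactors (hlen ξ).le, List.map_map]
  simp only [Function.comp_def, hμ.apply_zpow (hg _) (hg' _) (hlen ξ).le, htop, mul_ite, mul_one,
    mul_zero]
  rw [← List.sum_toFinset _ hnd, Finset.sum_ite_eq, if_pos (List.mem_toFinset.mpr (hall ξ))]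

/-- Abstract form of "exponents in the normal form equal the Milnor invariants":
with `μ` satisfying the Milnor product formula, if the elements `g_σ` (and their
inverses) have vanishing invariants in all lengths `< p` and satisfy
`μ(I_ξ)(g_σ) = δ_{ξσ}` for the designated top-length-`p` sequences `I_ξ`, then for
`z = Π_σ g_σ^{e_σ}` (product in any order) one has `μ(I_ξ)(z) = e_ξ`. -/
theorem stmt14 (ι S G : Type*) [Group G] [DecidableEq S]
    (μ : List ι → G → ℤ)
    (hprod : ∀ (I : List ι) (z₁ z₂ : G), μ I (z₁ * z₂) =
      μ I z₁ + μ I z₂ + ∑ k ∈ Finset.Ico 1 I.length, μ (I.take k) z₁ * μ (I.drop k) z₂)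
    (p : ℕ) (hp : 0 < p) (topSeq : S → List ι)
    (hlen : ∀ ξ, (topSeq ξ).length = p)
    (g : S → G) (e : S → ℤ)
    (hlow : ∀ (σ : S) (I : List ι), I.length < p → μ I (g σ) = 0 ∧ μ I (g σ)⁻¹ = 0)
    (htop : ∀ ξ σ : S, μ (topSeq ξ) (g σ) = if ξ = σ then 1 else 0)
    (l : List S) (hnd : l.Nodup) (hall : ∀ σ : S, σ ∈ l) :
    ∀ ξ : S, μ (topSeq ξ) ((l.map fun σ => g σ ^ e σ).prod) = e ξ :=
  stmt14_general ι S G μ hprod p topSeq hlen g e hlow htop l hnd hall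
end
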